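/- arXiv:1407.5878 — 5 statements merged into one kernel-verified Lean document; each statement's English description precedes it below -/
import Mathlib

section
/- There exists a constant c > 0 such that for all n ≥ 2, ⌈log₂(2^n !) / log₂(n · 2^(n-1))⌉ ≥ c · 2^n. In particular c = 1/4 works. -/
/-!
Write `n = m + 1`. Since `(2k)! ≥ k ^ k`, the numerator `log₂ (2 ^ n)!` is at least `m · 2 ^ m`;
since `m + 1 ≤ 2 ^ m`, the denominator `log₂ ((m + 1) · 2 ^ m)` is at most `2m`. The ratio is
therefore at least `2 ^ m / 2 = 2 ^ n / 4`, and so is its ceiling.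
-/

open Nat

theorem Nat.pow_self_le_factorial_two_mul (k : ℕ) : k ^ k ≤ (2 * k)! := calc
  k ^ k ≤ (k + 1) ^ k := Nat.pow_le_pow_left k.le_succ k
  _ ≤ k ! * (k + 1) ^ k := Nat.le_mul_of_pos_left _ k.factorial_pos
  _ ≤ (k + k)! := Nat.factorial_mul_pow_le_factorial
  _ = (2 * k)! := by rw [two_mul]

theorem two_pow_mul_le_logb_factorial_two_pow_succ (m : ℕ) :
    (2 : ℝ) ^ m * m ≤ Real.logb 2 ((2 ^ (m + 1))! : ℕ) := by
  have h : ((2 : ℝ) ^ m) ^ 2 ^ m ≤ ((2 ^ (m + 1))! : ℕ) := by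
    rw [pow_succ']
    exact_mod_cast Nat.pow_self_le_factorial_two_mul (2 ^ m)
  calc (2 : ℝ) ^ m * m = Real.logb 2 (((2 : ℝ) ^ m) ^ 2 ^ m) := by
        rw [Real.logb_pow, Real.logb_pow, Real.logb_self_eq_one one_lt_two]
        push_cast
        ring
    _ ≤ _ := Real.logb_le_logb_of_le one_lt_two (by positivity) h

theorem logb_succ_mul_two_pow_le (m : ℕ) : Real.logb 2 ((m + 1 : ℝ) * 2 ^ m) ≤ 2 * m := by
  have h : (m + 1 : ℝ) ≤ 2 ^ m := by exact_mod_cast Nat.lt_two_pow_self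
  calc Real.logb 2 ((m + 1 : ℝ) * 2 ^ m) ≤ Real.logb 2 ((2 : ℝ) ^ m * 2 ^ m) :=
        Real.logb_le_logb_of_le one_lt_two (by positivity) (by gcongr)
    _ = 2 * m := by
        rw [← pow_add, Real.logb_pow, Real.logb_self_eq_one one_lt_two]
        push_cast
        ring

theorem logb_succ_mul_two_pow_pos {m : ℕ} (hm : 1 ≤ m) :
    0 < Real.logb 2 ((m + 1 : ℝ) * 2 ^ m) := by
  have hm' : (1 : ℝ) ≤ m := by exact_mod_cast hm
  have h2m : (1 : ℝ) ≤ 2 ^ m := one_le_pow₀ one_le_two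
  exact Real.logb_pos one_lt_two (by nlinarith)

theorem two_pow_succ_div_four_le_logb_ratio {m : ℕ} (hm : 1 ≤ m) :
    (2 : ℝ) ^ (m + 1) / 4 ≤
      Real.logb 2 ((2 ^ (m + 1))! : ℕ) / Real.logb 2 ((m + 1 : ℝ) * 2 ^ m) := by
  have hm' : (m : ℝ) ≠ 0 := by exact_mod_cast (by omega : m ≠ 0)
  have hnum := two_pow_mul_le_logb_factorial_two_pow_succ m
  calc (2 : ℝ) ^ (m + 1) / 4 = 2 ^ m * m / (2 * m) := by
        field_simp
        ring
    _ ≤ _ := div_le_div₀ ((by positivity : (0 : ℝ) ≤ 2 ^ m * m).trans hnum) hnum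
        (logb_succ_mul_two_pow_pos hm) (logb_succ_mul_two_pow_le m)

theorem stmt_4 :
    ∃ c : ℝ, c = 1 / 4 ∧ 0 < c ∧ ∀ n : ℕ, 2 ≤ n →
      (⌈Real.logb 2 (Nat.factorial (2 ^ n)) / Real.logb 2 ((n : ℝ) * 2 ^ (n - 1))⌉ : ℝ) ≥
        c * 2 ^ n := by
  refine ⟨1 / 4, rfl, by norm_num, fun n hn => ?_⟩
  obtain ⟨m, rfl⟩ : ∃ m, n = m + 1 := ⟨n - 1, by omega⟩
  calc (1 / 4 : ℝ) * 2 ^ (m + 1) = 2 ^ (m + 1) / 4 := by ring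
    _ ≤ _ := two_pow_succ_div_four_le_logb_ratio (by omega)
    _ ≤ _ := by simpa using Int.le_ceil _
end

section
/- Every permutation a of a set of even cardinality 2m can be decomposed as a = h₂ ∘ v ∘ h₁, where, after fixing a partition of the set into two blocks of size m, h₁ and h₂ each preserve both blocks (i.e., lie in the Young subgroup S_m × S_m) and v is a product of disjoint transpositions each swapping paired elements across the blocks (i.e., v lies in the subgroup S_2^m determined by a fixed pairing matching the two blocks). -/
open Equiv Finset

private def flipV (m : ℕ) (b : Fin m → Bool) : Equiv.Perm (Fin m × Bool) where
  toFun x := (x.1, xor x.2 (b x.1))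
  invFun x := (x.1, xor x.2 (b x.1))
  left_inv x := by cases x; simp [Bool.xor_assoc]
  right_inv x := by cases x; simp [Bool.xor_assoc]

private theorem key (m : ℕ) (a : Equiv.Perm (Fin m × Bool)) :
    ∃ h₁ h₂ v : Equiv.Perm (Fin m × Bool),
      (∀ x, (h₁ x).2 = x.2) ∧
      (∀ x, (h₂ x).2 = x.2) ∧
      (∃ b : Fin m → Bool, ∀ x, v x = (x.1, xor x.2 (b x.1))) ∧
      ∀ x, a x = h₂ (v (h₁ x)) := by
  classical
  set f₀ : Fin m → Bool := fun i => (a (i, false)).2 with hf₀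
  set f₁ : Fin m → Bool := fun i => !(a (i, true)).2 with hf₁
  -- counting
  have htot : (univ.filter fun x : Fin m × Bool => (a x).2 = true).card = m := by
    have h1 : (univ.filter fun x : Fin m × Bool => (a x).2 = true).card
        = (univ.filter fun y : Fin m × Bool => y.2 = true).card :=
      Finset.card_equiv a (fun x => by simp)
    have h2 : (univ.filter fun y : Fin m × Bool => y.2 = true)
        = univ ×ˢ {true} := by
      ext ⟨i, c⟩; simp
    rw [h1, h2, Finset.card_product]
    simp
  have hsplit : (univ.filter fun x : Fin m × Bool => (a x).2 = true).card
      = (univ.filter fun i : Fin m => (a (i, false)).2 = true).card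
        + (univ.filter fun i : Fin m => (a (i, true)).2 = true).card := by
    simp only [Finset.card_filter, Fintype.sum_prod_type, Fintype.sum_bool]
    rw [Finset.sum_add_distrib, add_comm]
  have hcompl : (univ.filter fun i : Fin m => (a (i, true)).2 = true).card
      + (univ.filter fun i : Fin m => ¬((a (i, true)).2 = true)).card = m := by
    rw [Finset.card_filter_add_card_filter_not]
    simp
  have hcard : (univ.filter fun i : Fin m => f₀ i = true).card
      = (univ.filter fun i : Fin m => f₁ i = true).card := by
    have e0 : (univ.filter fun i : Fin m => f₀ i = true)
        = (univ.filter fun i : Fin m => (a (i, false)).2 = true) := rfl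
    have e1 : (univ.filter fun i : Fin m => f₁ i = true)
        = (univ.filter fun i : Fin m => ¬((a (i, true)).2 = true)) := by
      apply Finset.filter_congr
      intro i _
      simp [hf₁]
    rw [e0, e1]
    omega
  have hcardc : (univ.filter fun i : Fin m => ¬(f₀ i = true)).card
      = (univ.filter fun i : Fin m => ¬(f₁ i = true)).card := by
    have t0 := Finset.card_filter_add_card_filter_not
      (s := (univ : Finset (Fin m))) (p := fun i => f₀ i = true)
    have t1 := Finset.card_filter_add_card_filter_not
      (s := (univ : Finset (Fin m))) (p := fun i => f₁ i = true)
    omega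
  have e_t : { i : Fin m // f₀ i = true } ≃ { i : Fin m // f₁ i = true } :=
    Fintype.equivOfCardEq (by
      rw [Fintype.card_subtype, Fintype.card_subtype]; exact hcard)
  have e_f : { i : Fin m // ¬(f₀ i = true) } ≃ { i : Fin m // ¬(f₁ i = true) } :=
    Fintype.equivOfCardEq (by
      rw [Fintype.card_subtype, Fintype.card_subtype]; exact hcardc)
  set σ : Equiv.Perm (Fin m) := Equiv.subtypeCongr e_t e_f with hσdef
  have hσ : ∀ i, f₁ (σ i) = f₀ i := by
    intro i
    by_cases h : f₀ i = true
    · have h2 : f₁ (σ i) = true := by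
        have hs : σ i = (e_t ⟨i, h⟩ : Fin m) := by
          simp [hσdef, Equiv.subtypeCongr, h]
        rw [hs]; exact (e_t ⟨i, h⟩).2
      rw [h2, h]
    · have h2 : ¬(f₁ (σ i) = true) := by
        have hs : σ i = (e_f ⟨i, h⟩ : Fin m) := by
          simp [hσdef, Equiv.subtypeCongr, h]
        rw [hs]; exact (e_f ⟨i, h⟩).2
      simp only [Bool.not_eq_true] at h h2
      rw [h2, h]
  set h₁ : Equiv.Perm (Fin m × Bool) :=
    Equiv.prodCongrLeft (fun c : Bool => if c then σ.symm else Equiv.refl (Fin m)) with hh₁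
  have hvs : ∀ (i : Fin m) (c : Bool), (flipV m f₀).symm (i, c) = (i, xor c (f₀ i)) :=
    fun i c => rfl
  have hh1s : ∀ (j : Fin m) (d : Bool),
      h₁.symm (j, d) = ((if d then σ j else j : Fin m), d) := by
    intro j d
    rw [Equiv.symm_apply_eq]
    cases d <;> simp [hh₁, Equiv.prodCongrLeft_apply]
  refine ⟨h₁, (flipV m f₀).symm.trans (h₁.symm.trans a), flipV m f₀,
    fun x => rfl, ?_, ⟨f₀, fun x => rfl⟩, fun x => by simp⟩
  -- h₂ preserves blocks
  intro x
  obtain ⟨i, c⟩ := x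
  show (a (h₁.symm ((flipV m f₀).symm (i, c)))).2 = c
  rw [hvs, hh1s]
  have hσi := hσ i
  cases hb : f₀ i <;> rw [hb] at hσi <;> cases c
  · -- f₀ i = false, c = false : middle block false
    simpa using hb
  · -- f₀ i = false, c = true : middle block true
    have : (!(a (σ i, true)).2) = false := hσi
    simpa using this
  · -- f₀ i = true, c = false : middle block true
    have : (!(a (σ i, true)).2) = true := hσi
    simpa using this
  · -- f₀ i = true, c = true : middle block false
    simpa using hb

/-- Young subgroup decomposition: identifying a set of cardinality `2m` with
`Fin m × Bool` (the two blocks given by the second component, the pairing by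
the first component), every permutation `a` factors as `h₂ ∘ v ∘ h₁` with
`h₁, h₂ ∈ S_m × S_m` (block-preserving) and `v ∈ S_2^m` (swapping within pairs). -/
theorem stmt_8 (α : Type) [Fintype α] (m : ℕ) (e : α ≃ Fin m × Bool) (a : Equiv.Perm α) :
    ∃ h₁ h₂ v : Equiv.Perm α,
      (∀ x, (e (h₁ x)).2 = (e x).2) ∧
      (∀ x, (e (h₂ x)).2 = (e x).2) ∧
      (∃ b : Fin m → Bool, ∀ x, e (v x) = ((e x).1, xor (e x).2 (b (e x).1))) ∧
      ∀ x, a x = h₂ (v (h₁ x)) := by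
  obtain ⟨h₁', h₂', v', H1, H2, ⟨b, Hv⟩, Hdec⟩ := key m (e.permCongr a)
  have hpc : ∀ (p : Equiv.Perm (Fin m × Bool)) (x : α),
      e ((e.permCongr.symm p) x) = p (e x) := by
    intro p x
    simp [Equiv.permCongr_symm, Equiv.permCongr_apply]
  refine ⟨e.permCongr.symm h₁', e.permCongr.symm h₂', e.permCongr.symm v', ?_, ?_, ⟨b, ?_⟩, ?_⟩
  · intro x; rw [hpc]; exact H1 (e x)
  · intro x; rw [hpc]; exact H2 (e x)
  · intro x; rw [hpc]; exact Hv (e x)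
  · intro x
    have h := Hdec (e x)
    apply e.injective
    rw [hpc, hpc, hpc]
    simpa [Equiv.permCongr_apply] using h
end

section
/- Let f : 𝔹^n → 𝔹^n be a bijection and fix a coordinate i. Then there exist bijections g₁, g₂, f' : 𝔹^n → 𝔹^n such that f = g₂ ∘ f' ∘ g₁, the i-th coordinate of f'(x) equals x_i for all x, and each of g₁, g₂ is a single-target gate on coordinate i, i.e., there are Boolean functions c₁, c₂ of the remaining n-1 coordinates with g_j(x) = x except that coordinate i is replaced by x_i ⊕ c_j(x with coordinate i removed). -/
/-- A single-target gate with target `i` and control function `c` (which must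
not depend on coordinate `i`): flips coordinate `i` iff `c` evaluates to true. -/
def stg {n : ℕ} (i : Fin n) (c : (Fin n → Bool) → Bool) (x : Fin n → Bool) : Fin n → Bool :=
  Function.update x i (xor (x i) (c x))

/-- `c` does not depend on coordinate `i`, i.e. it is a function of the
remaining `n - 1` coordinates. -/
def IndepOf {n : ℕ} (i : Fin n) (c : (Fin n → Bool) → Bool) : Prop :=
  ∀ x y : Fin n → Bool, (∀ j, j ≠ i → x j = y j) → c x = c y

open Equiv Equiv.Perm in
lemma key_exists {α : Type*} (σ τ : Equiv.Perm α)
    (hσp : ∀ x, σ (σ x) = x) (hτp : ∀ x, τ (τ x) = x)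
    (hσf : ∀ x, σ x ≠ x) (hτf : ∀ x, τ x ≠ x) :
    ∃ t : α → Bool, (∀ x, t (σ x) = ! t x) ∧ (∀ x, t (τ x) = ! t x) := by
  classical
  have hσ1 : σ * σ = 1 := Equiv.ext fun x => by simp [Perm.mul_apply, hσp]
  have hτ1 : τ * τ = 1 := Equiv.ext fun x => by simp [Perm.mul_apply, hτp]
  have hσi : σ⁻¹ = σ := inv_eq_of_mul_eq_one_left hσ1
  have hτi : τ⁻¹ = τ := inv_eq_of_mul_eq_one_left hτ1
  set ρ := σ * τ with hρ
  -- conjugation : σ * ρ * σ⁻¹ = ρ⁻¹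
  have hconj : σ * ρ * σ⁻¹ = ρ⁻¹ := by
    rw [hσi, hρ, mul_inv_rev, hσi, hτi, ← mul_assoc, hσ1, one_mul]
  have hconjz : ∀ k : ℤ, σ * ρ ^ k * σ⁻¹ = ρ ^ (-k) := by
    intro k
    rw [← conj_zpow, hconj, inv_zpow, zpow_neg]
  have hconjp : ∀ (k : ℤ) (a : α), σ ((ρ ^ k) a) = (ρ ^ (-k) : Equiv.Perm α) (σ a) := by
    intro k a
    have := congrArg (fun g : Equiv.Perm α => g (σ a)) (hconjz k)
    simpa [Perm.mul_apply, hσi, hσp] using this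
  -- no odd alternating word has a fixed point
  have main : ∀ k : ℕ, ∀ x, ((σ*τ)^k) x ≠ σ x ∧ ((τ*σ)^k) x ≠ τ x := by
    intro k
    induction k with
    | zero =>
      intro x
      constructor
      · simpa using fun h => hσf x h.symm
      · simpa using fun h => hτf x h.symm
    | succ k ih =>
      intro x
      constructor
      · intro h
        rw [pow_succ'] at h
        have h2 : τ (((σ*τ)^k) x) = x := σ.injective (by simpa [Perm.mul_apply] using h)
        have h3 : ((σ*τ)^k) x = τ x := by
          have := congrArg τ h2
          rwa [hτp] at this
        have hc : (τ*σ)^k = τ * (σ*τ)^k * τ⁻¹ := by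
          rw [← conj_pow, hτi, ← mul_assoc, mul_assoc (τ*σ), hτ1, mul_one]
        have h4 : ((τ*σ)^k) (τ x) = τ (τ x) := by
          rw [hc]
          simp only [Perm.mul_apply, hτi, hτp]
          rw [h3, hτp]
        exact (ih (τ x)).2 h4
      · intro h
        rw [pow_succ'] at h
        have h2 : σ (((τ*σ)^k) x) = x := τ.injective (by simpa [Perm.mul_apply] using h)
        have h3 : ((τ*σ)^k) x = σ x := by
          have := congrArg σ h2
          rwa [hσp] at this
        have hc : (σ*τ)^k = σ * (τ*σ)^k * σ⁻¹ := by
          rw [← conj_pow, hσi, ← mul_assoc, mul_assoc (σ*τ), hσ1, mul_one]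
        have h4 : ((σ*τ)^k) (σ x) = σ (σ x) := by
          rw [hc]
          simp only [Perm.mul_apply, hσi, hσp]
          rw [h3, hσp]
        exact (ih (σ x)).1 h4
  have notsame : ∀ x, ¬ ρ.SameCycle x (σ x) := by
    rintro x ⟨k, hk⟩
    obtain ⟨m, rfl | rfl⟩ := Int.eq_nat_or_neg k
    · rw [zpow_natCast] at hk
      exact (main m x).1 hk
    · have h1 : (ρ ^ (m:ℕ)) (σ x) = x := by
        have := congrArg (fun y => ((ρ^(m:ℕ) : Equiv.Perm α)) y) hk
        rw [← Perm.mul_apply, ← zpow_natCast, ← zpow_add] at this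
        simpa using this.symm
      exact (main m (σ x)).1 (by rw [hσp]; exact h1)
  -- SameCycle conjugation
  have scconj : ∀ {a b}, ρ.SameCycle a b → ρ.SameCycle (σ a) (σ b) := by
    rintro a b ⟨k, hk⟩
    exact ⟨-k, by rw [← hconjp k a, hk]⟩
  -- the setoid
  let r : α → α → Prop := fun x y => ρ.SameCycle x y ∨ ρ.SameCycle x (σ y)
  have req : Equivalence r := by
    constructor
    · intro x; exact Or.inl (Equiv.Perm.SameCycle.refl _ _)
    · rintro x y (h | h)
      · exact Or.inl h.symm
      · refine Or.inr ?_
        have := scconj h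
        rw [hσp] at this
        exact this.symm
    · rintro x y z (h1 | h1) (h2 | h2)
      · exact Or.inl (h1.trans h2)
      · exact Or.inr (h1.trans h2)
      · exact Or.inr (h1.trans (by simpa [hσp] using (scconj h2 : ρ.SameCycle (σ y) (σ z))))
      · refine Or.inl (h1.trans ?_)
        have := scconj h2
        rwa [hσp] at this
  letI s : Setoid α := ⟨r, req⟩
  let rep : α → α := fun x => (Quotient.mk s x).out
  have hrep : ∀ x, r (rep x) x := fun x => Quotient.mk_out x
  have hrepσ : ∀ x, rep (σ x) = rep x := by
    intro x
    have : Quotient.mk s (σ x) = Quotient.mk s x :=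
      Quotient.sound (Or.inr (Equiv.Perm.SameCycle.rfl))
    simp only [rep, this]
  have hrepρ : ∀ x, rep (ρ x) = rep x := by
    intro x
    have : Quotient.mk s (ρ x) = Quotient.mk s x :=
      Quotient.sound (Or.inl ⟨-1, by simp⟩)
    simp only [rep, this]
  let t : α → Bool := fun x => decide (ρ.SameCycle (rep x) x)
  have htρ : ∀ x, t (ρ x) = t x := by
    intro x
    simp only [t, hrepρ]
    rw [decide_eq_decide]
    constructor
    · intro h; exact h.trans ⟨-1, by simp⟩
    · intro h; exact h.trans ⟨1, by simp⟩
  have htσ : ∀ x, t (σ x) = ! t x := by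
    intro x
    simp only [t, hrepσ]
    rw [← decide_not, decide_eq_decide]
    constructor
    · intro h hP
      exact notsame x (hP.symm.trans h)
    · intro hP
      rcases hrep x with h | h
      · exact absurd h hP
      · exact h
  refine ⟨t, htσ, ?_⟩
  intro x
  have hτσρ : τ x = σ (ρ x) := by
    simp only [hρ, Perm.mul_apply, hσp]
  rw [hτσρ, htσ, htρ]

lemma indepOf_of_flip {n : ℕ} (i : Fin n) (c : (Fin n → Bool) → Bool)
    (h : ∀ x, c (Function.update x i (!(x i))) = c x) : IndepOf i c := by
  intro x y hxy
  by_cases hi : x i = y i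
  · have hx : x = y := funext fun j => by
      by_cases hj : j = i
      · subst hj; exact hi
      · exact hxy j hj
    rw [hx]
  · have hy : y = Function.update x i (!(x i)) := by
      funext j
      by_cases hj : j = i
      · subst hj
        simp only [Function.update_self]
        cases h1 : x j <;> cases h2 : y j <;> simp_all
      · rw [Function.update_of_ne hj]
        exact (hxy j hj).symm
    rw [hy, h]

lemma stg_ne {n : ℕ} (i : Fin n) (c : (Fin n → Bool) → Bool) (x : Fin n → Bool)
    (j : Fin n) (hj : j ≠ i) : stg i c x j = x j := by
  simp [stg, Function.update_of_ne hj]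

lemma stg_stg {n : ℕ} (i : Fin n) (c : (Fin n → Bool) → Bool) (h : IndepOf i c)
    (x : Fin n → Bool) : stg i c (stg i c x) = x := by
  have hc : c (stg i c x) = c x := h _ _ fun j hj => stg_ne i c x j hj
  have hat : ∀ y : Fin n → Bool, (stg i c y) i = xor (y i) (c y) := by
    intro y; simp [stg]
  funext j
  by_cases hj : j = i
  · subst hj
    rw [hat, hat, hc]
    cases x j <;> cases c x <;> rfl
  · rw [stg_ne i c _ j hj, stg_ne i c x j hj]

theorem stmt_9 (n : ℕ) (f : (Fin n → Bool) ≃ (Fin n → Bool)) (i : Fin n) :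
    ∃ (c₁ c₂ : (Fin n → Bool) → Bool) (f' : (Fin n → Bool) ≃ (Fin n → Bool)),
      IndepOf i c₁ ∧ IndepOf i c₂ ∧
      (∀ x, f' x i = x i) ∧
      ∀ x, f x = stg i c₂ (f' (stg i c₁ x)) := by
  classical
  set σfun : (Fin n → Bool) → (Fin n → Bool) := fun x => Function.update x i (!(x i)) with hσfun
  have hflip : Function.Involutive σfun := by
    intro x
    funext j
    by_cases hj : j = i
    · subst hj; simp [σfun]
    · simp [σfun, Function.update_of_ne hj]
  have hσfi : ∀ x, σfun x i = !(x i) := fun x => by simp [σfun]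
  let σE : Equiv.Perm (Fin n → Bool) := hflip.toPerm
  have hσE : ∀ x, σE x = σfun x := fun x => rfl
  let τE : Equiv.Perm (Fin n → Bool) := f.symm.trans (σE.trans f)
  have hτE : ∀ z, τE z = f (σE (f.symm z)) := fun z => rfl
  have hτf : ∀ x, τE (f x) = f (σE x) := by
    intro x; rw [hτE, Equiv.symm_apply_apply]
  have hσp : ∀ x, σE (σE x) = x := fun x => hflip x
  have hτp : ∀ z, τE (τE z) = z := by
    intro z
    simp only [hτE, Equiv.symm_apply_apply, hσp, Equiv.apply_symm_apply]
  have hσnf : ∀ x, σE x ≠ x := by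
    intro x hx
    have := congrFun hx i
    rw [hσE, hσfi] at this
    exact Bool.not_ne_self _ this
  have hτnf : ∀ z, τE z ≠ z := by
    intro z hz
    rw [hτE] at hz
    have : σE (f.symm z) = f.symm z := by
      have := congrArg f.symm hz
      rwa [Equiv.symm_apply_apply] at this
    exact hσnf _ this
  obtain ⟨t, ht1, ht2⟩ := key_exists σE τE hσp hτp hσnf hτnf
  set c₁ : (Fin n → Bool) → Bool := fun x => xor (x i) (t (f x)) with hc₁
  set c₂ : (Fin n → Bool) → Bool := fun z => xor (z i) (t z) with hc₂
  have hind₁ : IndepOf i c₁ := by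
    apply indepOf_of_flip
    intro x
    have h1 : f (Function.update x i (!(x i))) = τE (f x) := (hτf x).symm
    simp only [hc₁, Function.update_self, h1, ht2]
    cases x i <;> cases t (f x) <;> rfl
  have hind₂ : IndepOf i c₂ := by
    apply indepOf_of_flip
    intro z
    have h1 : t (Function.update z i (!(z i))) = ! t z := ht1 z
    simp only [hc₂, Function.update_self, h1]
    cases z i <;> cases t z <;> rfl
  refine ⟨c₁, c₂, ⟨fun x => stg i c₂ (f (stg i c₁ x)),
    fun z => stg i c₁ (f.symm (stg i c₂ z)), ?_, ?_⟩, hind₁, hind₂, ?_, ?_⟩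
  · intro x
    simp only [stg_stg i c₂ hind₂, Equiv.symm_apply_apply, stg_stg i c₁ hind₁]
  · intro z
    simp only [stg_stg i c₁ hind₁, Equiv.apply_symm_apply, stg_stg i c₂ hind₂]
  · intro x
    show (stg i c₂ (f (stg i c₁ x))) i = x i
    have hstg2 : ∀ z, (stg i c₂ z) i = t z := by
      intro z
      simp only [stg, Function.update_self, hc₂]
      cases z i <;> cases t z <;> rfl
    rw [hstg2]
    have hstg1 : stg i c₁ x = Function.update x i (t (f x)) := by
      funext j
      by_cases hj : j = i
      · subst hj
        simp only [stg, Function.update_self, hc₁]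
        cases x j <;> cases t (f x) <;> rfl
      · rw [stg_ne i c₁ x j hj, Function.update_of_ne hj]
    rw [hstg1]
    by_cases hb : t (f x) = x i
    · rw [hb, Function.update_eq_self]
      exact hb
    · have hb' : t (f x) = !(x i) := by
        cases h1 : x i <;> cases h2 : t (f x) <;> simp_all
      rw [hb']
      have h2 : Function.update x i (!(x i)) = σE x := rfl
      rw [h2, ← hτf, ht2, hb']
      cases x i <;> rfl
  · intro x
    show f x = stg i c₂ ((fun x => stg i c₂ (f (stg i c₁ x))) (stg i c₁ x))
    simp only
    rw [stg_stg i c₁ hind₁, stg_stg i c₂ hind₂]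
end

section
/- Circuits on n lines consisting of n single-target gates whose targets are lines 1, 2, ..., n in increasing order realize exactly (2^(2^(n-1)))^n distinct bijections of 𝔹^n; i.e., distinct tuples of control functions yield distinct overall functions. -/
/-- Half V-shaped circuit on `n` lines: `n` single-target gates with targets
`1, …, n` in increasing order, with control functions `c`. -/
def circuit {n : ℕ} (c : Fin n → ((Fin n → Bool) → Bool)) (x : Fin n → Bool) : Fin n → Bool :=
  (List.finRange n).foldl (fun y j => stg j (c j) y) x

namespace Stmt14Aux

lemma stg_apply_ne {n : ℕ} (i j : Fin n) (c : (Fin n → Bool) → Bool) (x : Fin n → Bool)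
    (h : j ≠ i) : stg i c x j = x j := by
  simp [stg, Function.update_of_ne h]

lemma stg_apply_self {n : ℕ} (i : Fin n) (c : (Fin n → Bool) → Bool) (x : Fin n → Bool) :
    stg i c x i = xor (x i) (c x) := by
  simp [stg]

lemma stg_invol {n : ℕ} (i : Fin n) (c : (Fin n → Bool) → Bool) (h : IndepOf i c)
    (x : Fin n → Bool) : stg i c (stg i c x) = x := by
  have hc : c (stg i c x) = c x := by
    apply h
    intro j hj
    exact stg_apply_ne i j c x hj
  funext j
  by_cases hj : j = i
  · subst hj
    rw [stg_apply_self, stg_apply_self, hc]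
    cases x j <;> cases c x <;> rfl
  · rw [stg_apply_ne i j c _ hj, stg_apply_ne i j c _ hj]

lemma stg_surj {n : ℕ} (i : Fin n) (c : (Fin n → Bool) → Bool) (h : IndepOf i c) :
    Function.Surjective (stg i c) :=
  fun y => ⟨stg i c y, stg_invol i c h y⟩

/-- partial circuit: first `k` gates. -/
def pcirc {n : ℕ} (c : Fin n → ((Fin n → Bool) → Bool)) (k : ℕ) (x : Fin n → Bool) :
    Fin n → Bool :=
  ((List.finRange n).take k).foldl (fun y j => stg j (c j) y) x

lemma foldl_surj {n : ℕ} (c : Fin n → ((Fin n → Bool) → Bool))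
    (hc : ∀ j, IndepOf j (c j)) (L : List (Fin n)) :
    Function.Surjective (fun x => L.foldl (fun y j => stg j (c j) y) x) := by
  induction L with
  | nil => exact fun y => ⟨y, rfl⟩
  | cons a L ih =>
    intro y
    obtain ⟨z, hz⟩ := ih y
    obtain ⟨x, hx⟩ := stg_surj a (c a) (hc a) z
    exact ⟨x, by simpa [hx] using hz⟩

lemma foldl_congr {n : ℕ} (c d : Fin n → ((Fin n → Bool) → Bool)) (L : List (Fin n))
    (h : ∀ a ∈ L, c a = d a) (x : Fin n → Bool) :
    L.foldl (fun y j => stg j (c j) y) x = L.foldl (fun y j => stg j (d j) y) x := by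
  induction L generalizing x with
  | nil => rfl
  | cons a L ih =>
    simp only [List.foldl_cons]
    rw [h a (by simp)]
    exact ih (fun b hb => h b (by simp [hb])) _

lemma foldl_apply_ne {n : ℕ} (c : Fin n → ((Fin n → Bool) → Bool)) (L : List (Fin n))
    (j : Fin n) (h : ∀ a ∈ L, a ≠ j) (x : Fin n → Bool) :
    L.foldl (fun y i => stg i (c i) y) x j = x j := by
  induction L generalizing x with
  | nil => rfl
  | cons a L ih =>
    simp only [List.foldl_cons]
    rw [ih (fun b hb => h b (by simp [hb])) _, stg_apply_ne _ _ _ _ (h a (by simp)).symm]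

lemma mem_take_finRange {n : ℕ} {k : ℕ} {a : Fin n} (h : a ∈ (List.finRange n).take k) :
    (a : ℕ) < k := by
  rw [List.mem_iff_getElem] at h
  obtain ⟨m, hm, hma⟩ := h
  have hm' : m < k := lt_of_lt_of_le hm (by simp [List.length_take])
  rw [List.getElem_take, List.getElem_finRange] at hma
  subst hma
  simpa using hm'

lemma mem_drop_finRange {n : ℕ} {k : ℕ} {a : Fin n} (h : a ∈ (List.finRange n).drop k) :
    k ≤ (a : ℕ) := by
  rw [List.mem_iff_getElem] at h
  obtain ⟨m, hm, hma⟩ := h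
  rw [List.getElem_drop, List.getElem_finRange] at hma
  subst hma
  simp

/-- Key decomposition: the output at coordinate `j` reads off `c j` applied to the
state after the first `j` gates. -/
lemma circuit_apply {n : ℕ} (c : Fin n → ((Fin n → Bool) → Bool)) (j : Fin n)
    (x : Fin n → Bool) :
    circuit c x j = xor (pcirc c j x j) (c j (pcirc c j x)) := by
  have hlen : (j : ℕ) < (List.finRange n).length := by simp
  have hsplit : List.finRange n =
      (List.finRange n).take j ++ (j :: (List.finRange n).drop (j + 1)) := by
    conv_lhs => rw [← List.take_append_drop (j : ℕ) (List.finRange n)]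
    rw [List.drop_eq_getElem_cons hlen, List.getElem_finRange]
    simp
  rw [circuit]
  conv_lhs => rw [hsplit]
  rw [List.foldl_append, List.foldl_cons]
  rw [foldl_apply_ne]
  · rw [stg_apply_self]
    rfl
  · intro a ha
    have := mem_drop_finRange ha
    intro haj
    subst haj
    omega

lemma pcirc_congr {n : ℕ} (c d : Fin n → ((Fin n → Bool) → Bool)) (k : ℕ)
    (h : ∀ a : Fin n, (a : ℕ) < k → c a = d a) : pcirc c k = pcirc d k := by
  funext x
  exact foldl_congr c d _ (fun a ha => h a (mem_take_finRange ha)) x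

lemma pcirc_surj {n : ℕ} (c : Fin n → ((Fin n → Bool) → Bool))
    (hc : ∀ j, IndepOf j (c j)) (k : ℕ) : Function.Surjective (pcirc c k) :=
  foldl_surj c hc _

theorem circuit_inj {n : ℕ} (c d : Fin n → ((Fin n → Bool) → Bool))
    (hc : ∀ j, IndepOf j (c j)) (hd : ∀ j, IndepOf j (d j))
    (h : circuit c = circuit d) : c = d := by
  have key : ∀ m : ℕ, ∀ j : Fin n, (j : ℕ) = m → c j = d j := by
    intro m
    induction m using Nat.strong_induction_on with
    | _ m ih =>
      intro j hj
      have hpre : pcirc c (j : ℕ) = pcirc d (j : ℕ) := by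
        apply pcirc_congr
        intro a ha
        exact ih (a : ℕ) (by omega) a rfl
      funext y
      obtain ⟨x, hx⟩ := pcirc_surj c hc (j : ℕ) y
      have h1 : circuit c x j = circuit d x j := by rw [h]
      rw [circuit_apply, circuit_apply, hpre] at h1
      rw [← hx, hpre]
      cases hY : pcirc d (j : ℕ) x j <;> simp [hY] at h1 <;> exact h1
  funext j; exact key (j : ℕ) j rfl

noncomputable def indepEquiv {n : ℕ} (i : Fin n) :
    {g : (Fin n → Bool) → Bool // IndepOf i g} ≃ ({x : Fin n → Bool // x i = false} → Bool) where
  toFun g x := g.1 x.1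
  invFun h := ⟨fun x => h ⟨Function.update x i false, by simp⟩, by
    intro x y hxy
    have : Function.update x i false = Function.update y i false := by
      funext k
      by_cases hk : k = i
      · subst hk; simp
      · rw [Function.update_of_ne hk, Function.update_of_ne hk]
        exact hxy k hk
    simp [this]⟩
  left_inv g := by
    apply Subtype.ext
    funext x
    exact g.2 _ _ (fun k hk => Function.update_of_ne hk _ _)
  right_inv h := by
    funext x
    have hx : Function.update x.1 i false = x.1 := by
      funext k
      by_cases hk : k = i
      · subst hk; simp [x.2]
      · rw [Function.update_of_ne hk]
    exact congrArg h (Subtype.ext hx)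

noncomputable def falseEquiv {n : ℕ} (i : Fin n) :
    {x : Fin n → Bool // x i = false} ≃ ({k : Fin n // k ≠ i} → Bool) where
  toFun x k := x.1 k.1
  invFun h := ⟨fun k => if hk : k = i then false else h ⟨k, hk⟩, by simp⟩
  left_inv x := by
    apply Subtype.ext
    funext k
    by_cases hk : k = i
    · subst hk; simp [x.2]
    · simp [hk]
  right_inv h := by
    funext k
    simp [k.2]

lemma card_indep {n : ℕ} (i : Fin n) :
    Nat.card {g : (Fin n → Bool) → Bool // IndepOf i g} = 2 ^ 2 ^ (n - 1) := by
  have h1 : Nat.card {k : Fin n // k ≠ i} = n - 1 := by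
    rw [Nat.card_eq_fintype_card]
    have : Fintype.card {k : Fin n // ¬ k = i} = Fintype.card (Fin n) - Fintype.card {k : Fin n // k = i} :=
      Fintype.card_subtype_compl _
    simp [Fintype.card_subtype_eq] at this
    simpa using this
  have h2 : Nat.card {x : Fin n → Bool // x i = false} = 2 ^ (n - 1) := by
    rw [Nat.card_congr (falseEquiv i), Nat.card_fun, h1]
    simp
  rw [Nat.card_congr (indepEquiv i), Nat.card_fun, h2]
  simp

end Stmt14Aux

theorem stmt_14 (n : ℕ) (hn : 1 ≤ n) :
    (∀ c d : Fin n → ((Fin n → Bool) → Bool),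
      (∀ j, IndepOf j (c j)) → (∀ j, IndepOf j (d j)) →
      circuit c = circuit d → c = d) ∧
    Set.ncard {f : (Fin n → Bool) → (Fin n → Bool) |
        ∃ c : Fin n → ((Fin n → Bool) → Bool),
          (∀ j, IndepOf j (c j)) ∧ f = circuit c} =
      (2 ^ 2 ^ (n - 1)) ^ n := by
  refine ⟨Stmt14Aux.circuit_inj, ?_⟩
  have hset : {f : (Fin n → Bool) → (Fin n → Bool) |
        ∃ c : Fin n → ((Fin n → Bool) → Bool), (∀ j, IndepOf j (c j)) ∧ f = circuit c}
      = circuit '' {c | ∀ j, IndepOf j (c j)} := by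
    ext f
    simp only [Set.mem_setOf_eq, Set.mem_image]
    constructor
    · rintro ⟨c, hc, rfl⟩; exact ⟨c, hc, rfl⟩
    · rintro ⟨c, hc, rfl⟩; exact ⟨c, hc, rfl⟩
  have hinj : Set.InjOn circuit
      {c : Fin n → ((Fin n → Bool) → Bool) | ∀ j, IndepOf j (c j)} :=
    fun c hc d hd h => Stmt14Aux.circuit_inj c d hc hd h
  rw [hset, Set.ncard_image_of_injOn hinj]
  rw [← Nat.card_coe_set_eq]
  have e : ↥{c : Fin n → ((Fin n → Bool) → Bool) | ∀ j, IndepOf j (c j)} ≃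
      ∀ j : Fin n, {g : (Fin n → Bool) → Bool // IndepOf j g} :=
    Equiv.subtypePiEquivPi
  rw [Nat.card_congr e, Nat.card_pi]
  simp [Stmt14Aux.card_indep]
end

section
/- The number of Boolean multiple-output functions from 𝔹^{n-1} to 𝔹^n equals (2^(2^(n-1)))^n, which equals the number of half V-shaped reversible circuits on n lines (n single-target gates with increasing targets). Hence there is a bijection between functions in B_{n-1,n} and such circuits. -/
/-!
Reading off the target line of the first gate of a circuit recovers its control function,
`c a x = x a ⊕ (circuit c x) a`, because no later gate touches line `a`. Since each gate is an
involution, it can then be cancelled and the argument repeated on the remaining gates; hence a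
half V-shaped circuit determines its control functions. A control function that ignores its
target line is the same as a Boolean function of the other `n - 1` lines, so these circuits are
in bijection with `n`-tuples of functions `𝔹^{n-1} → 𝔹`, i.e. with `B_{n-1,n}`.
-/

section Gates

variable {n : ℕ}

def runGates (c : Fin n → ((Fin n → Bool) → Bool)) (l : List (Fin n)) (x : Fin n → Bool) :
    Fin n → Bool :=
  l.foldl (fun y j => stg j (c j) y) x

lemma circuit_eq_runGates (c : Fin n → ((Fin n → Bool) → Bool)) :
    circuit c = runGates c (List.finRange n) :=
  rfl

lemma stg_apply_self (i : Fin n) (c : (Fin n → Bool) → Bool) (x : Fin n → Bool) :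
    stg i c x i = xor (x i) (c x) :=
  Function.update_self ..

lemma stg_apply_of_ne {i j : Fin n} (c : (Fin n → Bool) → Bool) (x : Fin n → Bool)
    (h : j ≠ i) : stg i c x j = x j :=
  Function.update_of_ne h ..

lemma stg_involutive {i : Fin n} {c : (Fin n → Bool) → Bool} (h : IndepOf i c) :
    Function.Involutive (stg i c) := by
  intro x
  have hc : c (stg i c x) = c x := h _ _ fun j hj => stg_apply_of_ne c x hj
  funext j
  by_cases hj : j = i
  · subst hj
    rw [stg_apply_self, stg_apply_self, hc, Bool.xor_assoc, Bool.xor_self, Bool.xor_false]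
  · rw [stg_apply_of_ne _ _ hj, stg_apply_of_ne _ _ hj]

lemma runGates_cons (c : Fin n → ((Fin n → Bool) → Bool)) (a : Fin n) (l : List (Fin n)) :
    runGates c (a :: l) = runGates c l ∘ stg a (c a) :=
  rfl

lemma runGates_apply_of_not_mem (c : Fin n → ((Fin n → Bool) → Bool)) {l : List (Fin n)}
    {i : Fin n} (h : i ∉ l) (x : Fin n → Bool) : runGates c l x i = x i := by
  induction l generalizing x with
  | nil => rfl
  | cons a l ih =>
    rw [List.mem_cons, not_or] at h
    rw [runGates_cons, Function.comp_apply, ih h.2, stg_apply_of_ne _ _ h.1]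

lemma eq_of_runGates_eq {c c' : Fin n → ((Fin n → Bool) → Bool)} {l : List (Fin n)}
    (hl : l.Nodup) (hc : ∀ j ∈ l, IndepOf j (c j)) (h : runGates c l = runGates c' l) :
    ∀ j ∈ l, c j = c' j := by
  induction l with
  | nil => simp
  | cons a l ih =>
    rw [List.nodup_cons] at hl
    have read_off : ∀ d : Fin n → ((Fin n → Bool) → Bool), ∀ x,
        runGates d (a :: l) x a = xor (x a) (d a x) := fun d x => by
      rw [runGates_cons, Function.comp_apply, runGates_apply_of_not_mem d hl.1, stg_apply_self]
    have head_eq : c a = c' a := funext fun x => by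
      simpa [read_off] using congrFun (congrFun h x) a
    have tail_eq : runGates c l = runGates c' l := by
      rw [runGates_cons, runGates_cons, ← head_eq] at h
      exact (stg_involutive (hc a List.mem_cons_self)).surjective.injective_comp_right h
    rintro j (_ | ⟨_, hj⟩)
    · exact head_eq
    · exact ih hl.2 (fun j hj => hc j (List.mem_cons_of_mem _ hj)) tail_eq j hj

lemma circuit_injOn :
    Set.InjOn (circuit (n := n)) {c | ∀ j, IndepOf j (c j)} := fun _ hc _ _ h =>
  funext fun j => eq_of_runGates_eq (List.nodup_finRange n) (fun j _ => hc j) h j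
    (List.mem_finRange j)

end Gates

def indepOfEquiv (m : ℕ) (j : Fin (m + 1)) :
    ((Fin m → Bool) → Bool) ≃ {d : (Fin (m + 1) → Bool) → Bool // IndepOf j d} where
  toFun d := ⟨fun x => d (x ∘ j.succAbove), fun x y hxy =>
    congrArg d (funext fun k => hxy _ (Fin.succAbove_ne j k))⟩
  invFun d y := d.1 (j.insertNth false y)
  left_inv d := by
    funext y
    simp [Function.comp_def, Fin.insertNth_apply_succAbove]
  right_inv d := by
    ext x
    refine d.2 _ _ fun k hk => ?_
    obtain ⟨k', rfl⟩ := Fin.exists_succAbove_eq hk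
    simp [Fin.insertNth_apply_succAbove]

noncomputable def circuitEquiv (n : ℕ) :
    {c : Fin n → ((Fin n → Bool) → Bool) // ∀ j, IndepOf j (c j)} ≃
      {f : (Fin n → Bool) → (Fin n → Bool) |
        ∃ c : Fin n → ((Fin n → Bool) → Bool), (∀ j, IndepOf j (c j)) ∧ f = circuit c} :=
  (Equiv.Set.imageOfInjOn _ _ circuit_injOn).trans (Equiv.setCongr (by ext; simp [eq_comm]))

noncomputable def boolFunEquivCircuit (m : ℕ) :
    ((Fin m → Bool) → (Fin (m + 1) → Bool)) ≃
      {f : (Fin (m + 1) → Bool) → (Fin (m + 1) → Bool) |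
        ∃ c : Fin (m + 1) → ((Fin (m + 1) → Bool) → Bool),
          (∀ j, IndepOf j (c j)) ∧ f = circuit c} :=
  (Equiv.piComm _).trans <| (Equiv.piCongrRight (indepOfEquiv m)).trans <|
    Equiv.subtypePiEquivPi.symm.trans (circuitEquiv (m + 1))

lemma card_boolFun (k n : ℕ) :
    Fintype.card ((Fin k → Bool) → (Fin n → Bool)) = (2 ^ 2 ^ k) ^ n := by
  simp only [Fintype.card_fun, Fintype.card_bool, Fintype.card_fin, ← pow_mul, mul_comm]

theorem stmt_15 (n : ℕ) (hn : 1 ≤ n) :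
    Fintype.card ((Fin (n - 1) → Bool) → (Fin n → Bool)) = (2 ^ 2 ^ (n - 1)) ^ n ∧
    Set.ncard {f : (Fin n → Bool) → (Fin n → Bool) |
        ∃ c : Fin n → ((Fin n → Bool) → Bool),
          (∀ j, IndepOf j (c j)) ∧ f = circuit c} = (2 ^ 2 ^ (n - 1)) ^ n ∧
    Nonempty (((Fin (n - 1) → Bool) → (Fin n → Bool)) ≃
      {f : (Fin n → Bool) → (Fin n → Bool) |
        ∃ c : Fin n → ((Fin n → Bool) → Bool),
          (∀ j, IndepOf j (c j)) ∧ f = circuit c}) := by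
  obtain ⟨m, rfl⟩ : ∃ m, n = m + 1 := ⟨n - 1, by omega⟩
  refine ⟨card_boolFun _ _, ?_, ⟨boolFunEquivCircuit m⟩⟩
  rw [← Nat.card_coe_set_eq, ← Nat.card_congr (boolFunEquivCircuit m),
    Nat.card_eq_fintype_card, card_boolFun, Nat.add_sub_cancel]
end
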